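/- arXiv:1008.4878 — 2 statements merged into one kernel-verified Lean document; each statement's English description precedes it below -/
import Mathlib

section
/- Let (G,j,π) be an iterated extension of (KNP) by (PQR) whose Q-main extension (G,i,π) (with i := j∘i₀) has outer action θ. The group isomorphism Z^1(R,Z(K)^P) ≅ Aut(KNGQR), λ ↦ (g ↦ i(λ(φ̄(π(g))))·g), restricts to an isomorphism of B^1(R,Z(K)^P) onto 𝒞_G(Z(K)^P), the group of inner automorphisms of G induced by elements of i(Z(K)^P), sending the coboundary ∂z₀ (for z₀ ∈ Z(K)^P) to conjugation by i(z₀)⁻¹. -/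
namespace IES

section OutDef

variable (K : Type*) [Group K]

/-- The subgroup of inner automorphisms of `K` inside `MulAut K`. -/
def Inn : Subgroup (MulAut K) := (MulAut.conj : K →* MulAut K).range

instance : (Inn K).Normal := by
  constructor
  rintro x ⟨k, rfl⟩ η
  refine ⟨η k, ?_⟩
  ext y
  simp [MulAut.conj_apply, MulAut.mul_apply, map_mul, map_inv]

/-- The outer automorphism group `Out K := Aut K / Inn K`. -/
abbrev Out := MulAut K ⧸ Inn K

/-- Canonical projection `Aut K → Out K`. -/
def toOut : MulAut K →* Out K := QuotientGroup.mk' (Inn K)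

lemma center_map (η : K ≃* K) {z : K} (hz : z ∈ Subgroup.center K) :
    η z ∈ Subgroup.center K := by
  rw [Subgroup.mem_center_iff] at hz ⊢
  intro g
  calc g * η z = η (η.symm g * z) := by rw [map_mul, η.apply_symm_apply]
    _ = η (z * η.symm g) := by rw [hz (η.symm g)]
    _ = η z * g := by rw [map_mul, η.apply_symm_apply]

/-- Restriction of automorphisms of `K` to its center. -/
def centerAut : MulAut K →* MulAut (Subgroup.center K) where
  toFun η :=
    { toFun := fun z => ⟨η z.1, center_map K η z.2⟩
      invFun := fun z => ⟨η.symm z.1, center_map K η.symm z.2⟩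
      left_inv := fun z => Subtype.ext (η.symm_apply_apply z.1)
      right_inv := fun z => Subtype.ext (η.apply_symm_apply z.1)
      map_mul' := fun a b => Subtype.ext (map_mul η a.1 b.1) }
  map_one' := by ext z; rfl
  map_mul' := fun a b => by ext z; rfl

lemma centerAut_inn : ∀ x ∈ Inn K, centerAut K x = 1 := by
  rintro x ⟨k, rfl⟩
  ext z
  have hz := z.2
  rw [Subgroup.mem_center_iff] at hz
  show k * z.1 * k⁻¹ = z.1
  rw [hz k, mul_inv_cancel_right]

/-- The action of `Out K` on the center of `K`. -/
def outCenter : Out K →* MulAut (Subgroup.center K) :=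
  QuotientGroup.lift (Inn K) (centerAut K) (centerAut_inn K)

end OutDef

section ModK

variable {K N : Type*} [Group K] [Group N]

/-- The group of automorphisms of `N` stabilizing the image of `K`. -/
def autK (i0 : K →* N) : Subgroup (MulAut N) where
  carrier := {η | ∀ n, η n ∈ i0.range ↔ n ∈ i0.range}
  one_mem' := by intro n; rw [MulAut.one_apply]
  mul_mem' := by
    intro a b ha hb n
    rw [MulAut.mul_apply]
    exact (ha (b n)).trans (hb n)
  inv_mem' := by
    intro a ha n
    have h := ha (a⁻¹ n)
    rw [MulAut.apply_inv_self] at h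
    exact h.symm

lemma mem_autK_iff {i0 : K →* N} {η : MulAut N} :
    η ∈ autK i0 ↔ ∀ n, η n ∈ i0.range ↔ n ∈ i0.range := Iff.rfl

/-- The subgroup of `autK i0` of inner automorphisms induced by elements of `i0 K`. -/
def cInn (i0 : K →* N) : Subgroup (autK i0) where
  carrier := {η | ∃ k : K, (η : MulAut N) = MulAut.conj (i0 k)}
  one_mem' := ⟨1, by simp⟩
  mul_mem' := by
    rintro a b ⟨k1, h1⟩ ⟨k2, h2⟩
    exact ⟨k1 * k2, by rw [Subgroup.coe_mul, h1, h2, ← map_mul, ← map_mul]⟩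
  inv_mem' := by
    rintro a ⟨k, h⟩
    exact ⟨k⁻¹, by rw [Subgroup.coe_inv, h, ← map_inv, ← map_inv]⟩

lemma conj_conj_eq (η : MulAut N) (x : N) :
    η * MulAut.conj x * η⁻¹ = MulAut.conj (η x) := by
  ext y
  simp [MulAut.conj_apply, MulAut.mul_apply, map_mul, map_inv]

instance (i0 : K →* N) : (cInn i0).Normal := by
  constructor
  rintro c ⟨k, hk⟩ g
  obtain ⟨k', hk'⟩ := (g.2 (i0 k)).mpr ⟨k, rfl⟩
  refine ⟨k', ?_⟩
  rw [Subgroup.coe_mul, Subgroup.coe_mul, Subgroup.coe_inv, hk, conj_conj_eq, hk']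

/-- The mod-`K` outer automorphism group `Out(N;K)`. -/
abbrev OutNK (i0 : K →* N) := ↥(autK i0) ⧸ cInn i0

/-- Canonical projection onto the mod-`K` outer automorphism group. -/
def mkNK (i0 : K →* N) : ↥(autK i0) →* OutNK i0 := QuotientGroup.mk' (cInn i0)

end ModK


section Cocycles

variable {K P Q R : Type*} [Group K] [Group P] [Group Q] [Group R]

/-- Normalized 1-cocycles of `Q` with values in `Z(K)`, for the action induced by `θ`. -/
def IsZ1Q (θ : Q →* Out K) (lam : Q → ↥(Subgroup.center K)) : Prop :=
  lam 1 = 1 ∧ ∀ q1 q2 : Q, lam (q1 * q2) = lam q1 * outCenter K (θ q1) (lam q2)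

/-- Normalized 1-cocycles of `P` with values in `Z(K)`, for the action induced by `θ ∘ j̄`. -/
def IsZ1P (θ : Q →* Out K) (jb : P →* Q) (lam : P → ↥(Subgroup.center K)) : Prop :=
  lam 1 = 1 ∧ ∀ p1 p2 : P, lam (p1 * p2) = lam p1 * outCenter K (θ (jb p1)) (lam p2)

/-- Normalized 1-cocycles of `R` with values in `Z(K)^P`, where the action `θ₀` of `R`
is expressed via arbitrary `φ̄`-preimages in `Q`. -/
def IsZ1R (θ : Q →* Out K) (jb : P →* Q) (fb : Q →* R)
    (lam : R → ↥(Subgroup.center K)) : Prop :=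
  lam 1 = 1 ∧
  (∀ (r : R) (p : P), outCenter K (θ (jb p)) (lam r) = lam r) ∧
  ∀ q1 q2 : Q, lam (fb q1 * fb q2) = lam (fb q1) * outCenter K (θ q1) (lam (fb q2))

/-- Normalized 2-cocycles of `R` with values in `Z(K)^P`. -/
def IsZ2R (θ : Q →* Out K) (jb : P →* Q) (fb : Q →* R)
    (d : R → R → ↥(Subgroup.center K)) : Prop :=
  (∀ r : R, d 1 r = 1 ∧ d r 1 = 1) ∧
  (∀ (r1 r2 : R) (p : P), outCenter K (θ (jb p)) (d r1 r2) = d r1 r2) ∧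
  ∀ (q1 : Q) (r2 r3 : R),
    d (fb q1) r2 * d (fb q1 * r2) r3 = outCenter K (θ q1) (d r2 r3) * d (fb q1) (r2 * r3)

/-- The cohomology class of a 1-cocycle of `P` is fixed by the `R`-action. -/
def RFixed (θ : Q →* Out K) (jb : P →* Q) (lam : P → ↥(Subgroup.center K)) : Prop :=
  ∀ q : Q, ∃ z0 : ↥(Subgroup.center K), ∀ p p' : P,
    jb p' = q⁻¹ * jb p * q →
      outCenter K (θ q) (lam p') = z0⁻¹ * outCenter K (θ (jb p)) z0 * lam p

end Cocycles
/-! Since `i(K) = ker π` is normal and `i` is injective, conjugation by `g ∈ G` restricts to an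
automorphism of `K` whose outer class is `θ(π g)`; on the center this reads
`i(θ(π g) z) = g i(z) g⁻¹`. Hence `i(z⁻¹ · θ(π g) z) · g = i(z)⁻¹ g i(z)`: the automorphism
attached to a cocycle `λ` is conjugation by `i(z)⁻¹` exactly when `λ = ∂z`. The coboundary `∂z₀` is
well defined on `R` with values in `Z(K)^P` because `j̄(P) = ker φ̄` is normal and fixes `z₀`. -/

lemma outCenter_map_mul_apply {K Q : Type*} [Group K] [Group Q] (θ : Q →* Out K)
    (q₁ q₂ : Q) (z : ↥(Subgroup.center K)) :
    outCenter K (θ (q₁ * q₂)) z = outCenter K (θ q₁) (outCenter K (θ q₂) z) := by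
  rw [map_mul, map_mul, MulAut.mul_apply]

lemma exists_mulAut_conj_of_injective {K G : Type*} [Group K] [Group G] {i : K →* G}
    (hi : Function.Injective i) [i.range.Normal] (g : G) :
    ∃ κ : MulAut K, ∀ k, i (κ k) = g * i k * g⁻¹ :=
  ⟨((MonoidHom.ofInjective hi).trans (MulAut.conjNormal g)).trans (MonoidHom.ofInjective hi).symm,
    fun k => by simp [MulAut.conjNormal_apply, MonoidHom.ofInjective_apply]⟩

lemma map_outCenter_eq_conj {K G Q : Type*} [Group K] [Group G] [Group Q]
    (i : K →* G) (π : G →* Q) (θ : Q →* Out K) (hi : Function.Injective i)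
    (hker : i.range = π.ker)
    (hθ : ∀ (g : G) (κ : MulAut K), (∀ k, i (κ k) = g * i k * g⁻¹) → θ (π g) = toOut K κ)
    (g : G) (z : ↥(Subgroup.center K)) :
    i (outCenter K (θ (π g)) z) = g * i z * g⁻¹ := by
  have : i.range.Normal := hker ▸ π.normal_ker
  obtain ⟨κ, hκ⟩ := exists_mulAut_conj_of_injective hi g
  rw [hθ g κ hκ]
  exact hκ z

lemma mul_eq_conj_iff {K G Q : Type*} [Group K] [Group G] [Group Q]
    {i : K →* G} {π : G →* Q} {θ : Q →* Out K} (hi : Function.Injective i)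
    (hconj : ∀ (g : G) (z : ↥(Subgroup.center K)),
      i (outCenter K (θ (π g)) z) = g * i z * g⁻¹)
    (g : G) (lam z : ↥(Subgroup.center K)) :
    i lam * g = (i z)⁻¹ * g * i z ↔ lam = z⁻¹ * outCenter K (θ (π g)) z := by
  rw [← (hi.comp Subtype.val_injective).eq_iff, Function.comp_apply, Function.comp_apply,
    Subgroup.coe_mul, Subgroup.coe_inv, map_mul, map_inv, hconj,
    show (i z)⁻¹ * (g * i z * g⁻¹) = (i z)⁻¹ * g * i z * g⁻¹ by group, eq_mul_inv_iff_mul_eq]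

section Coboundary

variable {K P Q R : Type*} [Group K] [Group P] [Group Q] [Group R]
  (θ : Q →* Out K) {jb : P →* Q} {fb : Q →* R} {z₀ : ↥(Subgroup.center K)}

lemma outCenter_eq_of_map_eq (hker : jb.range = fb.ker)
    (hz₀ : ∀ p, outCenter K (θ (jb p)) z₀ = z₀) {q q' : Q} (h : fb q = fb q') :
    outCenter K (θ q) z₀ = outCenter K (θ q') z₀ := by
  obtain ⟨p, hp⟩ : q⁻¹ * q' ∈ jb.range := by
    rw [hker, MonoidHom.mem_ker, map_mul, map_inv, h, inv_mul_cancel]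
  rw [show q' = q * jb p by rw [hp, mul_inv_cancel_left], outCenter_map_mul_apply, hz₀]

lemma outCenter_outCenter_of_fixed (hker : jb.range = fb.ker)
    (hz₀ : ∀ p, outCenter K (θ (jb p)) z₀ = z₀) (q : Q) (p : P) :
    outCenter K (θ (jb p)) (outCenter K (θ q) z₀) = outCenter K (θ q) z₀ := by
  have hp : fb (jb p) = 1 := by rw [← MonoidHom.mem_ker, ← hker]; exact ⟨p, rfl⟩
  rw [← outCenter_map_mul_apply]
  exact outCenter_eq_of_map_eq θ hker hz₀ (by rw [map_mul, hp, one_mul])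

lemma exists_coboundary (hfb : Function.Surjective fb) (hker : jb.range = fb.ker)
    (hz₀ : ∀ p, outCenter K (θ (jb p)) z₀ = z₀) :
    ∃ dz : R → ↥(Subgroup.center K), ∀ q, dz (fb q) = z₀⁻¹ * outCenter K (θ q) z₀ :=
  ⟨fun r => z₀⁻¹ * outCenter K (θ (Function.surjInv hfb r)) z₀, fun q =>
    congrArg (z₀⁻¹ * ·) (outCenter_eq_of_map_eq θ hker hz₀ (Function.surjInv_eq hfb (fb q)))⟩

lemma isZ1R_of_eq_coboundary (hfb : Function.Surjective fb) (hker : jb.range = fb.ker)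
    (hz₀ : ∀ p, outCenter K (θ (jb p)) z₀ = z₀) {dz : R → ↥(Subgroup.center K)}
    (hdz : ∀ q, dz (fb q) = z₀⁻¹ * outCenter K (θ q) z₀) : IsZ1R θ jb fb dz := by
  refine ⟨?_, fun r p => ?_, fun q₁ q₂ => ?_⟩
  · rw [← map_one fb, hdz, map_one, map_one, MulAut.one_apply, inv_mul_cancel]
  · obtain ⟨q, rfl⟩ := hfb r
    rw [hdz, map_mul, map_inv, hz₀, outCenter_outCenter_of_fixed θ hker hz₀]
  · rw [← map_mul, hdz, hdz, hdz, outCenter_map_mul_apply, map_mul, map_inv]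
    group

end Coboundary

theorem statement1_general
    {K P Q R N G : Type*} [Group K] [Group P] [Group Q] [Group R] [Group N] [Group G]
    (i0 : K →* N) (jb : P →* Q) (fb : Q →* R)
    (j : N →* G) (π : G →* Q) (θ : Q →* Out K)
    (hi0 : Function.Injective i0)
    (hfb : Function.Surjective fb)
    (hker1 : jb.range = fb.ker)
    (hj : Function.Injective j) (hπ : Function.Surjective π)
    (hkerπ : (j.comp i0).range = π.ker)
    (hθ : ∀ (g : G) (κ : MulAut K),
      (∀ k, (j.comp i0) (κ k) = g * (j.comp i0) k * g⁻¹) → θ (π g) = toOut K κ) :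
    -- for z₀ ∈ Z(K)^P, the coboundary ∂z₀ exists, is a cocycle, and is sent to
    -- conjugation by i(z₀)⁻¹
    (∀ z0 : ↥(Subgroup.center K), (∀ p : P, outCenter K (θ (jb p)) z0 = z0) →
      (∃ dz : R → ↥(Subgroup.center K),
          ∀ q : Q, dz (fb q) = z0⁻¹ * outCenter K (θ q) z0) ∧
      (∀ dz : R → ↥(Subgroup.center K),
        (∀ q : Q, dz (fb q) = z0⁻¹ * outCenter K (θ q) z0) →
        IsZ1R θ jb fb dz ∧
        ∀ g : G, (j.comp i0) (dz (fb (π g)) : K) * g =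
          ((j.comp i0) (z0 : K))⁻¹ * g * (j.comp i0) (z0 : K))) ∧
    -- a cocycle is sent into the inner automorphisms induced by i(Z(K)^P) iff it is
    -- a coboundary
    (∀ lam : R → ↥(Subgroup.center K), IsZ1R θ jb fb lam →
      ((∃ z0 : ↥(Subgroup.center K), (∀ p : P, outCenter K (θ (jb p)) z0 = z0) ∧
          ∀ g : G, (j.comp i0) (lam (fb (π g)) : K) * g =
            (j.comp i0) (z0 : K) * g * ((j.comp i0) (z0 : K))⁻¹) ↔
       (∃ z0 : ↥(Subgroup.center K), (∀ p : P, outCenter K (θ (jb p)) z0 = z0) ∧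
          ∀ q : Q, lam (fb q) = z0⁻¹ * outCenter K (θ q) z0))) := by
  have hi : Function.Injective (j.comp i0) := hj.comp hi0
  have hconj := map_outCenter_eq_conj (j.comp i0) π θ hi hkerπ hθ
  refine ⟨fun z0 hz0 => ⟨exists_coboundary θ hfb hker1 hz0, fun dz hdz =>
    ⟨isZ1R_of_eq_coboundary θ hfb hker1 hz0 hdz,
      fun g => (mul_eq_conj_iff hi hconj g _ _).2 (hdz (π g))⟩⟩, fun lam _ => ⟨?_, ?_⟩⟩
  · rintro ⟨z0, hz0, hlam⟩
    refine ⟨z0⁻¹, fun p => by rw [map_inv, hz0], fun q => ?_⟩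
    obtain ⟨g, rfl⟩ := hπ q
    rw [← mul_eq_conj_iff hi hconj, hlam, Subgroup.coe_inv, map_inv, inv_inv]
  · rintro ⟨z0, hz0, hlam⟩
    refine ⟨z0⁻¹, fun p => by rw [map_inv, hz0], fun g => ?_⟩
    rw [(mul_eq_conj_iff hi hconj g _ _).2 (hlam (π g)), Subgroup.coe_inv, map_inv, inv_inv]

/-- The isomorphism `Z¹(R,Z(K)^P) ≃ Aut(KNGQR)` restricts to an
isomorphism of `B¹(R,Z(K)^P)` onto the group of inner automorphisms of `G` induced by
elements of `i(Z(K)^P)`, sending the coboundary `∂z₀` to conjugation by `i(z₀)⁻¹`. -/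
theorem statement1
    {K P Q R N G : Type*} [Group K] [Group P] [Group Q] [Group R] [Group N] [Group G]
    (i0 : K →* N) (π0 : N →* P) (jb : P →* Q) (fb : Q →* R)
    (j : N →* G) (π : G →* Q) (θ : Q →* Out K)
    (hi0 : Function.Injective i0) (hπ0 : Function.Surjective π0)
    (hker0 : i0.range = π0.ker)
    (hjb : Function.Injective jb) (hfb : Function.Surjective fb)
    (hker1 : jb.range = fb.ker)
    (hj : Function.Injective j) (hπ : Function.Surjective π)
    (hcomm : π.comp j = jb.comp π0)
    (hkerφ : j.range = (fb.comp π).ker)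
    (hkerπ : (j.comp i0).range = π.ker)
    (hθ : ∀ (g : G) (κ : MulAut K),
      (∀ k, (j.comp i0) (κ k) = g * (j.comp i0) k * g⁻¹) → θ (π g) = toOut K κ) :
    -- for z₀ ∈ Z(K)^P, the coboundary ∂z₀ exists, is a cocycle, and is sent to
    -- conjugation by i(z₀)⁻¹
    (∀ z0 : ↥(Subgroup.center K), (∀ p : P, outCenter K (θ (jb p)) z0 = z0) →
      (∃ dz : R → ↥(Subgroup.center K),
          ∀ q : Q, dz (fb q) = z0⁻¹ * outCenter K (θ q) z0) ∧
      (∀ dz : R → ↥(Subgroup.center K),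
        (∀ q : Q, dz (fb q) = z0⁻¹ * outCenter K (θ q) z0) →
        IsZ1R θ jb fb dz ∧
        ∀ g : G, (j.comp i0) (dz (fb (π g)) : K) * g =
          ((j.comp i0) (z0 : K))⁻¹ * g * (j.comp i0) (z0 : K))) ∧
    -- a cocycle is sent into the inner automorphisms induced by i(Z(K)^P) iff it is
    -- a coboundary
    (∀ lam : R → ↥(Subgroup.center K), IsZ1R θ jb fb lam →
      ((∃ z0 : ↥(Subgroup.center K), (∀ p : P, outCenter K (θ (jb p)) z0 = z0) ∧
          ∀ g : G, (j.comp i0) (lam (fb (π g)) : K) * g =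
            (j.comp i0) (z0 : K) * g * ((j.comp i0) (z0 : K))⁻¹) ↔
       (∃ z0 : ↥(Subgroup.center K), (∀ p : P, outCenter K (θ (jb p)) z0 = z0) ∧
          ∀ q : Q, lam (fb q) = z0⁻¹ * outCenter K (θ q) z0))) :=
  statement1_general i0 jb fb j π θ hi0 hfb hker1 hj hπ hkerπ hθ

end IES
end

section
/- Let (G,i,π) be an extension of K by Q with outer action θ. The group isomorphism Z^1(Q,Z(K)) ≅ Aut(KGQ), λ ↦ (g ↦ i(λ(π(g)))·g), carries B^1(Q,Z(K)) onto 𝒞_G(Z(K)), the group of inner automorphisms of G induced by elements of i(Z(K)) (sending the coboundary ∂z₀ to conjugation by i(z₀)⁻¹), and hence induces a group isomorphism from H^1(Q,Z(K)) onto Out(KGQ;K) := Aut(KGQ)/𝒞_G(Z(K)). -/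
/-!
Conjugation by `g ∈ G` acts on `i(Z(K))` through `θ(π g)`, so conjugating `g ↦ i(a(π g)) · g` by
`i(z₀)⁻¹` multiplies `a` by the coboundary `∂z₀`; comparing both sides at every `g` shows that two
cocycles give automorphisms differing by such a conjugation exactly when they are cohomologous.
Conversely, for `ξ ∈ Aut(KGQ)` the element `d(g) = ξ(g) g⁻¹` lies in `i(K)`, commutes with `i(K)`
(since `ξ` fixes `i(K)` pointwise and `i(K)` is normal), depends only on `π g`, and satisfies
`d(gh) = d(g) · g d(h) g⁻¹`, which is the cocycle identity for the action `θ`.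
-/

namespace IES

section Extension

variable {K Q G : Type*} [Group K] [Group Q] [Group G]

def coboundary (θ : Q →* Out K) (z0 : Subgroup.center K) (q : Q) : Subgroup.center K :=
  z0⁻¹ * outCenter K (θ q) z0

lemma isZ1Q_coboundary (θ : Q →* Out K) (z0 : Subgroup.center K) :
    IsZ1Q θ (coboundary θ z0) := by
  refine ⟨by simp [coboundary], fun q1 q2 => ?_⟩
  simp only [coboundary, map_mul, MulAut.mul_apply, map_inv]
  group

def IsOuterActionOf (i : K →* G) (π : G →* Q) (θ : Q →* Out K) : Prop :=
  ∀ (g : G) (κ : MulAut K), (∀ k, i (κ k) = g * i k * g⁻¹) → θ (π g) = toOut K κ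

variable {i : K →* G} {π : G →* Q} {θ : Q →* Out K}

lemma exists_mulAut_conj (hi : Function.Injective i) (hker : i.range = π.ker) (g : G) :
    ∃ κ : MulAut K, ∀ k, i (κ k) = g * i k * g⁻¹ := by
  have : i.range.Normal := hker ▸ π.normal_ker
  refine ⟨(MonoidHom.ofInjective hi).trans
    ((MulAut.conjNormal g).trans (MonoidHom.ofInjective hi).symm), fun k => ?_⟩
  simp [MonoidHom.ofInjective_apply]

lemma i_outCenter_apply (hi : Function.Injective i) (hker : i.range = π.ker)
    (hθ : IsOuterActionOf i π θ) (g : G) (z : Subgroup.center K) :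
    i (outCenter K (θ (π g)) z) = g * i z * g⁻¹ := by
  obtain ⟨κ, hκ⟩ := exists_mulAut_conj hi hker g
  rw [hθ g κ hκ]
  exact hκ z

lemma i_mul_coboundary_mul (hi : Function.Injective i) (hker : i.range = π.ker)
    (hθ : IsOuterActionOf i π θ) (a z0 : Subgroup.center K) (g : G) :
    i (a * coboundary θ z0 (π g)) * g = (i z0)⁻¹ * (i a * g) * i z0 := by
  have hcomm : Commute (i a) (i z0)⁻¹ :=
    ((show Commute (a : K) z0 from Subgroup.mem_center_iff.mp z0.2 a).map i).inv_right
  simp only [coboundary, Subgroup.coe_mul, InvMemClass.coe_inv, map_mul, map_inv,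
    i_outCenter_apply hi hker hθ]
  rw [← mul_assoc (i a), hcomm.eq]
  group

lemma conj_mul_eq_iff_cohomologous (hi : Function.Injective i) (hπ : Function.Surjective π)
    (hker : i.range = π.ker) (hθ : IsOuterActionOf i π θ) (lam1 lam2 : Q → Subgroup.center K) :
    (∃ z : Subgroup.center K,
        ∀ g : G, i (lam2 (π g)) * g = i z * (i (lam1 (π g)) * g) * (i z)⁻¹) ↔
      ∃ z0 : Subgroup.center K, ∀ q, lam2 q = lam1 q * coboundary θ z0 q := by
  have hconj : ∀ z0 : Subgroup.center K,
      (∀ g, i (lam2 (π g)) * g = (i z0)⁻¹ * (i (lam1 (π g)) * g) * i z0) ↔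
        ∀ q, lam2 q = lam1 q * coboundary θ z0 q := by
    intro z0
    simp_rw [← i_mul_coboundary_mul hi hker hθ, mul_left_inj, hi.eq_iff, ← Subgroup.coe_mul,
      Subtype.coe_inj]
    exact (hπ.forall (p := fun q => lam2 q = lam1 q * coboundary θ z0 q)).symm
  constructor
  · rintro ⟨z, hz⟩
    exact ⟨z⁻¹, (hconj z⁻¹).1 (by simpa using hz)⟩
  · rintro ⟨z0, hz0⟩
    exact ⟨z0⁻¹, by simpa using (hconj z0).2 hz0⟩

section AutKGQ

variable {ξ : MulAut G}

lemma apply_mul_inv_eq_of_map_eq (hker : i.range = π.ker) (hξi : ∀ k, ξ (i k) = i k) {g g' : G}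
    (h : π g = π g') :
    ξ g * g⁻¹ = ξ g' * g'⁻¹ := by
  obtain ⟨m, hm⟩ : g⁻¹ * g' ∈ i.range := by
    rw [hker, MonoidHom.mem_ker, map_mul, map_inv, h, inv_mul_cancel]
  obtain rfl : g' = g * i m := by rw [hm, mul_inv_cancel_left]
  rw [map_mul, hξi]
  group

lemma commute_apply_mul_inv (hker : i.range = π.ker) (hξi : ∀ k, ξ (i k) = i k) (g : G) (k : K) :
    Commute (ξ g * g⁻¹) (i k) := by
  obtain ⟨k', hk'⟩ : g⁻¹ * i k * g ∈ i.range := by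
    have hik : π (i k) = 1 := by rw [← MonoidHom.mem_ker, ← hker]; exact ⟨k, rfl⟩
    rw [hker, MonoidHom.mem_ker, map_mul, map_mul, map_inv, hik, mul_one, inv_mul_cancel]
  calc ξ g * g⁻¹ * i k = ξ g * ξ (i k') * g⁻¹ := by rw [hξi, hk']; group
    _ = ξ (i k * g) * g⁻¹ := by rw [← map_mul, hk']; group
    _ = i k * (ξ g * g⁻¹) := by rw [map_mul, hξi]; group

lemma exists_isZ1Q_apply_eq_mul (hi : Function.Injective i) (hπ : Function.Surjective π)
    (hker : i.range = π.ker) (hθ : IsOuterActionOf i π θ) (hξi : ∀ k, ξ (i k) = i k)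
    (hξπ : ∀ g, π (ξ g) = π g) :
    ∃ lam : Q → Subgroup.center K, IsZ1Q θ lam ∧ ∀ g, ξ g = i (lam (π g)) * g := by
  have hval : ∀ q, ∃ z : Subgroup.center K, ∀ g, π g = q → i z = ξ g * g⁻¹ := by
    intro q
    obtain ⟨g, rfl⟩ := hπ q
    obtain ⟨k, hk⟩ : ξ g * g⁻¹ ∈ i.range := by
      rw [hker, MonoidHom.mem_ker, map_mul, map_inv, hξπ, mul_inv_cancel]
    have hk_center : k ∈ Subgroup.center K := Subgroup.mem_center_iff.mpr fun x =>
      hi <| by rw [map_mul, map_mul, hk]; exact (commute_apply_mul_inv hker hξi g x).eq.symm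
    exact ⟨⟨k, hk_center⟩, fun g' hg' =>
      hk.trans (apply_mul_inv_eq_of_map_eq hker hξi hg'.symm)⟩
  choose lam hlam using hval
  refine ⟨lam, ⟨?_, fun q1 q2 => ?_⟩, fun g => by rw [hlam (π g) g rfl, inv_mul_cancel_right]⟩
  · refine Subtype.ext (hi ?_)
    rw [hlam 1 1 (map_one π), map_one, mul_inv_cancel, OneMemClass.coe_one, map_one]
  · obtain ⟨g1, rfl⟩ := hπ q1
    obtain ⟨g2, rfl⟩ := hπ q2
    refine Subtype.ext (hi ?_)
    rw [Subgroup.coe_mul, map_mul, i_outCenter_apply hi hker hθ, hlam _ (g1 * g2) (map_mul π g1 g2),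
      hlam _ g1 rfl, hlam _ g2 rfl, map_mul]
    group

end AutKGQ

end Extension

/-- The isomorphism `Z¹(Q,Z(K)) ≃ Aut(KGQ)` carries `B¹(Q,Z(K))`
onto the group of inner automorphisms of `G` induced by elements of `i(Z(K))`
(sending `∂z₀` to conjugation by `i(z₀)⁻¹`), and hence induces a group isomorphism
`H¹(Q,Z(K)) ≃ Out(KGQ;K) = Aut(KGQ)/𝒞_G(Z(K))`. -/
theorem statement4
    {K Q G : Type*} [Group K] [Group Q] [Group G]
    (i : K →* G) (π : G →* Q) (θ : Q →* Out K)
    (hi : Function.Injective i) (hπ : Function.Surjective π)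
    (hker : i.range = π.ker)
    (hθ : ∀ (g : G) (κ : MulAut K),
      (∀ k, i (κ k) = g * i k * g⁻¹) → θ (π g) = toOut K κ) :
    -- each coboundary ∂z₀ is a cocycle sent to conjugation by i(z₀)⁻¹
    (∀ z0 : ↥(Subgroup.center K),
      IsZ1Q θ (fun q => z0⁻¹ * outCenter K (θ q) z0) ∧
      ∀ g : G, i ((z0⁻¹ * outCenter K (θ (π g)) z0 : ↥(Subgroup.center K)) : K) * g =
        (i (z0 : K))⁻¹ * g * i (z0 : K)) ∧
    -- a cocycle is sent to an inner automorphism induced by an element of i(Z(K))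
    -- iff it is a coboundary
    (∀ lam : Q → ↥(Subgroup.center K), IsZ1Q θ lam →
      ((∃ z : ↥(Subgroup.center K),
          ∀ g : G, i (lam (π g) : K) * g = i (z : K) * g * (i (z : K))⁻¹) ↔
       (∃ z0 : ↥(Subgroup.center K),
          ∀ q : Q, lam q = z0⁻¹ * outCenter K (θ q) z0))) ∧
    -- surjectivity of Z¹ onto Aut(KGQ)
    (∀ ξ : MulAut G, (∀ k, ξ (i k) = i k) → (∀ g, π (ξ g) = π g) →
      ∃ lam : Q → ↥(Subgroup.center K), IsZ1Q θ lam ∧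
        ∀ g : G, ξ g = i (lam (π g) : K) * g) ∧
    -- the induced map on quotients H¹(Q,Z(K)) → Aut(KGQ)/𝒞_G(Z(K)) is a bijection:
    -- images agree up to an inner automorphism induced by i(Z(K)) iff the cocycles
    -- are cohomologous
    (∀ lam1 lam2 : Q → ↥(Subgroup.center K), IsZ1Q θ lam1 → IsZ1Q θ lam2 →
      ((∃ z : ↥(Subgroup.center K),
          ∀ g : G, i (lam2 (π g) : K) * g =
            i (z : K) * (i (lam1 (π g) : K) * g) * (i (z : K))⁻¹) ↔
       (∃ z0 : ↥(Subgroup.center K),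
          ∀ q : Q, lam2 q = lam1 q * (z0⁻¹ * outCenter K (θ q) z0)))) := by
  refine ⟨fun z0 => ⟨isZ1Q_coboundary θ z0, fun g => ?_⟩, fun lam _ => ?_,
    fun ξ hξi hξπ => exists_isZ1Q_apply_eq_mul hi hπ hker hθ hξi hξπ,
    fun lam1 lam2 _ _ => conj_mul_eq_iff_cohomologous hi hπ hker hθ lam1 lam2⟩
  · simpa [coboundary] using i_mul_coboundary_mul hi hker hθ 1 z0 g
  · simpa [coboundary] using conj_mul_eq_iff_cohomologous hi hπ hker hθ 1 lam

end IES
end
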